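/- arXiv:2411.00569 — 3 statements merged into one kernel-verified Lean document; each statement's English description precedes it below -/
import Mathlib

section
/- Let n ≥ 1. Let K : ℝⁿ → Matrix (Fin n) (Fin n) ℝ be a C¹ map with K(x) symmetric for every x, let V, W : ℝⁿ → ℝ be C¹, and let ρ : ℝⁿ → ℝⁿ be continuous. Define H(x,p) = ∑_i p_i² + V(x) and F(x,p) = ∑_{i,j} K_{ij}(x) p_i p_j + W(x). Then the identity {F,H}(x,p) = 2 (∑_k ρ_k(x) p_k) · H(x,p) holds for all (x,p) ∈ ℝⁿ × ℝⁿ if and only if for every x and all indices i,j,k: (i) ∂K_{ij}/∂x^k + ∂K_{jk}/∂x^i + ∂K_{ki}/∂x^j = ρ_k δ_{ij} + ρ_i δ_{jk} + ρ_j δ_{ki} (the flat conformal Killing tensor equation), and (ii) ∂W/∂x^i = ∑_j K_{ij} ∂V/∂x^j + V ρ_i. -/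
open scoped BigOperators

/-- Partial derivative of a function on ℝⁿ in the `i`-th coordinate direction. -/
noncomputable def pd {n : ℕ} (i : Fin n) (f : (Fin n → ℝ) → ℝ) (x : Fin n → ℝ) : ℝ :=
  fderiv ℝ f x (Pi.single i 1)

/-- Partial derivative in the `x^i` direction of a function on phase space ℝⁿ × ℝⁿ. -/
noncomputable def pdx {n : ℕ} (i : Fin n)
    (F : (Fin n → ℝ) × (Fin n → ℝ) → ℝ) (z : (Fin n → ℝ) × (Fin n → ℝ)) : ℝ :=
  fderiv ℝ F z (Pi.single i 1, 0)

/-- Partial derivative in the `p_i` direction of a function on phase space ℝⁿ × ℝⁿ. -/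
noncomputable def pdp {n : ℕ} (i : Fin n)
    (F : (Fin n → ℝ) × (Fin n → ℝ) → ℝ) (z : (Fin n → ℝ) × (Fin n → ℝ)) : ℝ :=
  fderiv ℝ F z (0, Pi.single i 1)

/-- Canonical Poisson bracket on ℝⁿ × ℝⁿ. -/
noncomputable def poisson {n : ℕ}
    (F G : (Fin n → ℝ) × (Fin n → ℝ) → ℝ) (z : (Fin n → ℝ) × (Fin n → ℝ)) : ℝ :=
  ∑ i : Fin n, (pdx i F z * pdp i G z - pdp i F z * pdx i G z)

/-- Kronecker delta. -/
def kdelta {n : ℕ} (i j : Fin n) : ℝ := if i = j then 1 else 0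

/-!
Since `K` is symmetric, `∂F/∂p_k = 2 ∑_j K_kj p_j`, so for fixed `x` the difference
`{F,H} - 2 (ρ·p) H` is twice a cubic form in `p` with coefficient tensor
`A_ijk = ∂_k K_ij - δ_ij ρ_k` plus a linear form with coefficients
`B_i = ∂_i W - ∑_j K_ij ∂_j V - V ρ_i`. Comparing `p` with `2p` shows that such a polynomial
vanishes identically iff both homogeneous parts do. The linear part vanishes iff `B = 0`, which
is (ii). By polarization, a cubic form whose tensor is symmetric in its first two indices
vanishes iff the cyclic sums `A_ijk + A_jki + A_kij` do, which is (i).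
-/

section TrilinearForm

variable {ι R : Type*} [Fintype ι] [CommRing R]

def trilinForm (A : ι → ι → ι → R) (u v w : ι → R) : R :=
  ∑ i, ∑ j, ∑ k, A i j k * u i * v j * w k

variable (A : ι → ι → ι → R)

lemma trilinForm_add_left (u u' v w : ι → R) :
    trilinForm A (u + u') v w = trilinForm A u v w + trilinForm A u' v w := by
  simp only [trilinForm, Pi.add_apply, mul_add, add_mul, Finset.sum_add_distrib]

lemma trilinForm_add_middle (u v v' w : ι → R) :
    trilinForm A u (v + v') w = trilinForm A u v w + trilinForm A u v' w := by
  simp only [trilinForm, Pi.add_apply, mul_add, add_mul, Finset.sum_add_distrib]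

lemma trilinForm_add_right (u v w w' : ι → R) :
    trilinForm A u v (w + w') = trilinForm A u v w + trilinForm A u v w' := by
  simp only [trilinForm, Pi.add_apply, mul_add, Finset.sum_add_distrib]

lemma trilinForm_sub (B : ι → ι → ι → R) (u v w : ι → R) :
    trilinForm (fun i j k => A i j k - B i j k) u v w
      = trilinForm A u v w - trilinForm B u v w := by
  simp only [trilinForm, sub_mul, Finset.sum_sub_distrib]

lemma trilinForm_single [DecidableEq ι] (i j k : ι) :
    trilinForm A (Pi.single i 1) (Pi.single j 1) (Pi.single k 1) = A i j k := by
  simp [trilinForm, Pi.single_apply]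

lemma trilinForm_diag_eq_sum_mul (p : ι → R) :
    trilinForm A p p p = ∑ k, (∑ i, ∑ j, A i j k * p i * p j) * p k := by
  simp only [trilinForm, Finset.sum_mul]
  symm
  rw [Finset.sum_comm]
  exact Finset.sum_congr rfl fun i _ => Finset.sum_comm

lemma trilinForm_rotate (p : ι → R) :
    trilinForm (fun i j k => A j k i) p p p = trilinForm A p p p := by
  rw [trilinForm, Finset.sum_comm]
  refine Finset.sum_congr rfl fun j _ => ?_
  rw [Finset.sum_comm]
  exact Finset.sum_congr rfl fun k _ => Finset.sum_congr rfl fun i _ => by ring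

lemma trilinForm_cyclic (p : ι → R) :
    trilinForm (fun i j k => A i j k + A j k i + A k i j) p p p = 3 * trilinForm A p p p := by
  have hsplit : trilinForm (fun i j k => A i j k + A j k i + A k i j) p p p
      = trilinForm A p p p + trilinForm (fun i j k => A j k i) p p p
        + trilinForm (fun i j k => A k i j) p p p := by
    simp only [trilinForm, add_mul, Finset.sum_add_distrib]
  have hrot := trilinForm_rotate A p
  have hrot₂ := trilinForm_rotate (fun i j k => A j k i) p
  beta_reduce at hrot₂
  linear_combination hsplit + 2 * hrot + hrot₂

lemma sum_perm_trilinForm_eq_zero (h : ∀ p, trilinForm A p p p = 0) (u v w : ι → R) :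
    trilinForm A u v w + trilinForm A u w v + trilinForm A v u w + trilinForm A v w u
      + trilinForm A w u v + trilinForm A w v u = 0 := by
  have huvw := h (u + v + w)
  have huv := h (u + v)
  have huw := h (u + w)
  have hvw := h (v + w)
  simp only [trilinForm_add_left, trilinForm_add_middle, trilinForm_add_right]
    at huvw huv huw hvw
  linear_combination huvw - huv - huw - hvw + h u + h v + h w

end TrilinearForm

section FieldCharZero

variable {ι 𝕜 : Type*} [Fintype ι] [DecidableEq ι] [Field 𝕜] [CharZero 𝕜]

lemma forall_trilinForm_eq_zero_iff {A : ι → ι → ι → 𝕜} (hA : ∀ i j k, A i j k = A j i k) :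
    (∀ p, trilinForm A p p p = 0) ↔ ∀ i j k, A i j k + A j k i + A k i j = 0 := by
  constructor
  · intro h i j k
    have h6 := sum_perm_trilinForm_eq_zero A h (Pi.single i 1) (Pi.single j 1) (Pi.single k 1)
    simp only [trilinForm_single] at h6
    have h2 : 2 * (A i j k + A j k i + A k i j) = 0 := by
      linear_combination h6 - hA i k j - hA j i k - hA k j i
    simpa using h2
  · intro h p
    have h3 : 3 * trilinForm A p p p = 0 := by
      rw [← trilinForm_cyclic]
      simp [h, trilinForm]
    simpa using h3

lemma forall_trilinForm_add_sum_eq_zero_iff {A : ι → ι → ι → 𝕜} {B : ι → 𝕜} :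
    (∀ p, trilinForm A p p p + ∑ k, B k * p k = 0)
      ↔ (∀ p, trilinForm A p p p = 0) ∧ ∀ k, B k = 0 := by
  constructor
  · intro h
    have hA : ∀ p, trilinForm A p p p = 0 := by
      intro p
      have h2 := h (p + p)
      simp only [trilinForm_add_left, trilinForm_add_middle, trilinForm_add_right,
        Pi.add_apply, mul_add, Finset.sum_add_distrib] at h2
      have h6 : 6 * trilinForm A p p p = 0 := by linear_combination h2 - 2 * h p
      simpa using h6
    refine ⟨hA, fun k => ?_⟩
    simpa [hA, Pi.single_apply] using h (Pi.single k 1)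
  · rintro ⟨hA, hB⟩ p
    simp [hA, hB]

end FieldCharZero

section QuadraticHamiltonian

variable {n : ℕ}

lemma kdelta_comm (i j : Fin n) : kdelta i j = kdelta j i := by
  simp only [kdelta, eq_comm]

lemma pdx_eq_pd {F : (Fin n → ℝ) × (Fin n → ℝ) → ℝ} {z : (Fin n → ℝ) × (Fin n → ℝ)}
    (hF : DifferentiableAt ℝ F z) (i : Fin n) :
    pdx i F z = pd i (fun x => F (x, z.2)) z.1 := by
  have h : HasFDerivAt (fun x => F (x, z.2)) ((fderiv ℝ F z).comp (.inl ℝ _ _)) z.1 :=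
    hF.hasFDerivAt.comp z.1 (hasFDerivAt_prodMk_left z.1 z.2)
  rw [pd, h.fderiv]
  rfl

lemma pdp_eq_pd {F : (Fin n → ℝ) × (Fin n → ℝ) → ℝ} {z : (Fin n → ℝ) × (Fin n → ℝ)}
    (hF : DifferentiableAt ℝ F z) (i : Fin n) :
    pdp i F z = pd i (fun p => F (z.1, p)) z.2 := by
  have h : HasFDerivAt (fun p => F (z.1, p)) ((fderiv ℝ F z).comp (.inr ℝ _ _)) z.2 :=
    hF.hasFDerivAt.comp z.2 (hasFDerivAt_prodMk_right z.1 z.2)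
  rw [pd, h.fderiv]
  rfl

noncomputable def quadHam (K : (Fin n → ℝ) → Matrix (Fin n) (Fin n) ℝ) (W : (Fin n → ℝ) → ℝ)
    (z : (Fin n → ℝ) × (Fin n → ℝ)) : ℝ :=
  ∑ i, ∑ j, K z.1 i j * z.2 i * z.2 j + W z.1

variable {K : (Fin n → ℝ) → Matrix (Fin n) (Fin n) ℝ} {W V : (Fin n → ℝ) → ℝ}

lemma quadHam_one (z : (Fin n → ℝ) × (Fin n → ℝ)) :
    quadHam 1 V z = ∑ i, z.2 i ^ 2 + V z.1 := by
  simp [quadHam, Matrix.one_apply, ite_mul, sq]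

lemma differentiable_quadHam (hK : ∀ i j, Differentiable ℝ (fun x => K x i j))
    (hW : Differentiable ℝ W) : Differentiable ℝ (quadHam K W) := by
  unfold quadHam
  fun_prop

lemma pdx_quadHam (hK : ∀ i j, Differentiable ℝ (fun x => K x i j))
    (hW : Differentiable ℝ W) (z : (Fin n → ℝ) × (Fin n → ℝ)) (k : Fin n) :
    pdx k (quadHam K W) z
      = ∑ i, ∑ j, pd k (fun x => K x i j) z.1 * z.2 i * z.2 j + pd k W z.1 := by
  have hKz := fun i j => hK i j z.1
  rw [pdx_eq_pd (differentiable_quadHam hK hW z)]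
  simp (disch := fun_prop) only [quadHam, pd, fderiv_fun_add, fderiv_fun_sum, fderiv_mul_const,
    add_apply, FunLike.coe_sum, Finset.sum_apply, smul_apply, smul_eq_mul]
  congr 1
  exact Finset.sum_congr rfl fun i _ => Finset.sum_congr rfl fun j _ => by ring

lemma pdp_quadHam (hK : ∀ i j, Differentiable ℝ (fun x => K x i j))
    (hW : Differentiable ℝ W) (z : (Fin n → ℝ) × (Fin n → ℝ)) (k : Fin n) :
    pdp k (quadHam K W) z = ∑ j, (K z.1 k j + K z.1 j k) * z.2 j := by
  rw [pdp_eq_pd (differentiable_quadHam hK hW z)]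
  simp (disch := fun_prop) only [quadHam, pd, fderiv_fun_add, fderiv_fun_sum, fderiv_fun_mul,
    fderiv_const_apply, (hasFDerivAt_apply _ _).fderiv, add_apply, FunLike.coe_sum,
    Finset.sum_apply, smul_apply, smul_eq_mul, ContinuousLinearMap.proj_apply, Pi.single_apply,
    zero_apply]
  simp only [mul_ite, mul_one, mul_zero, add_zero, Finset.sum_add_distrib, Finset.sum_ite_eq',
    Finset.mem_univ, if_true, Finset.sum_ite_irrel, Finset.sum_const_zero, add_mul]
  rw [add_comm]
  exact congrArg₂ (· + ·) (Finset.sum_congr rfl fun j _ => mul_comm _ _) rfl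

lemma pdx_quadHam_one (hV : Differentiable ℝ V) (z : (Fin n → ℝ) × (Fin n → ℝ)) (k : Fin n) :
    pdx k (quadHam 1 V) z = pd k V z.1 := by
  rw [pdx_quadHam (K := 1) (fun _ _ => differentiable_const _) hV]
  simp [pd]

lemma pdp_quadHam_one (hV : Differentiable ℝ V) (z : (Fin n → ℝ) × (Fin n → ℝ)) (k : Fin n) :
    pdp k (quadHam 1 V) z = 2 * z.2 k := by
  rw [pdp_quadHam (K := 1) (fun _ _ => differentiable_const _) hV]
  simp [Matrix.one_apply, add_mul, ite_mul, Finset.sum_add_distrib, two_mul]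

open Matrix in
lemma poisson_quadHam_one (hK : ∀ i j, Differentiable ℝ (fun x => K x i j))
    (hKsymm : ∀ x, (K x).IsSymm) (hW : Differentiable ℝ W) (hV : Differentiable ℝ V)
    (x p : Fin n → ℝ) :
    poisson (quadHam K W) (quadHam 1 V) (x, p)
      = 2 * (trilinForm (fun i j k => pd k (fun x => K x i j) x) p p p
          + ∑ k, (pd k W x - ∑ j, K x k j * pd j V x) * p k) := by
  have hKp : ∀ k, ∑ j, (K x k j + K x j k) * p j = 2 * (K x *ᵥ p) k := fun k => by
    simp only [(hKsymm x).apply, mulVec, dotProduct, ← two_mul, Finset.mul_sum, mul_assoc]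
  have hswap : ∑ k, (pd k W x - ∑ j, K x k j * pd j V x) * p k
      = ∑ k, pd k W x * p k - K x *ᵥ p ⬝ᵥ fun k => pd k V x := by
    rw [dotProduct_comm, dotProduct_mulVec, ← mulVec_transpose, (hKsymm x).eq]
    simp only [sub_mul, Finset.sum_sub_distrib]
    rfl
  simp only [poisson, pdx_quadHam hK hW, pdp_quadHam hK hW, pdx_quadHam_one hV,
    pdp_quadHam_one hV, trilinForm_diag_eq_sum_mul, hKp, hswap]
  rw [dotProduct, ← Finset.sum_sub_distrib, ← Finset.sum_add_distrib, Finset.mul_sum]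
  exact Finset.sum_congr rfl fun k _ => by ring

lemma sum_mul_quadHam_one (x p r : Fin n → ℝ) :
    (∑ k, r k * p k) * quadHam 1 V (x, p)
      = trilinForm (fun i j k => kdelta i j * r k) p p p + ∑ k, V x * r k * p k := by
  rw [trilinForm_diag_eq_sum_mul, Finset.sum_mul, ← Finset.sum_add_distrib]
  refine Finset.sum_congr rfl fun k _ => ?_
  rw [quadHam, mul_add]
  congr 1
  · simp only [Finset.mul_sum, Finset.sum_mul]
    exact Finset.sum_congr rfl fun i _ => Finset.sum_congr rfl fun j _ => by
      simp only [Pi.one_apply, Matrix.one_apply, kdelta]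
      ring
  · ring

theorem poisson_quadHam_one_eq_iff (hK : ∀ i j, Differentiable ℝ (fun x => K x i j))
    (hKsymm : ∀ x, (K x).IsSymm) (hW : Differentiable ℝ W) (hV : Differentiable ℝ V)
    (x r : Fin n → ℝ) :
    (∀ p, poisson (quadHam K W) (quadHam 1 V) (x, p)
        = 2 * (∑ k, r k * p k) * quadHam 1 V (x, p))
      ↔ (∀ i j k, pd k (fun x => K x i j) x + pd i (fun x => K x j k) x
              + pd j (fun x => K x k i) x
              = r k * kdelta i j + r i * kdelta j k + r j * kdelta k i)
          ∧ ∀ i, pd i W x = ∑ j, K x i j * pd j V x + V x * r i := by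
  set A : Fin n → Fin n → Fin n → ℝ :=
    fun i j k => pd k (fun x => K x i j) x - kdelta i j * r k
  set B : Fin n → ℝ := fun k => pd k W x - ∑ j, K x k j * pd j V x - V x * r k
  have hdiff : ∀ p, poisson (quadHam K W) (quadHam 1 V) (x, p)
      - 2 * (∑ k, r k * p k) * quadHam 1 V (x, p)
        = 2 * (trilinForm A p p p + ∑ k, B k * p k) := by
    intro p
    rw [poisson_quadHam_one hK hKsymm hW hV, mul_assoc, sum_mul_quadHam_one, trilinForm_sub]
    simp only [B, sub_mul, Finset.sum_sub_distrib]
    ring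
  have hA : ∀ i j k, A i j k = A j i k := fun i j k => by
    simp only [A, kdelta_comm i j, (hKsymm _).apply i j]
  calc _ ↔ ∀ p, trilinForm A p p p + ∑ k, B k * p k = 0 :=
        forall_congr' fun p => by
          rw [← sub_eq_zero, hdiff p, mul_eq_zero, or_iff_right two_ne_zero]
    _ ↔ (∀ i j k, A i j k + A j k i + A k i j = 0) ∧ ∀ k, B k = 0 := by
        rw [forall_trilinForm_add_sum_eq_zero_iff, forall_trilinForm_eq_zero_iff hA]
    _ ↔ _ := by
        refine and_congr (forall₃_congr fun i j k => ?_) (forall_congr' fun i => ?_)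
        · simp only [A]
          constructor <;> intro h <;> linarith
        · simp only [B, sub_sub, sub_eq_zero]

end QuadraticHamiltonian

theorem stmt2_general (n : ℕ)
    (K : (Fin n → ℝ) → Matrix (Fin n) (Fin n) ℝ)
    (hK : ∀ i j, ContDiff ℝ 1 (fun x => K x i j))
    (hKsymm : ∀ x, (K x).IsSymm)
    (V W : (Fin n → ℝ) → ℝ) (hV : ContDiff ℝ 1 V) (hW : ContDiff ℝ 1 W)
    (ρ : (Fin n → ℝ) → Fin n → ℝ)
    (H F : (Fin n → ℝ) × (Fin n → ℝ) → ℝ)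
    (hH : ∀ z, H z = ∑ i : Fin n, (z.2 i) ^ 2 + V z.1)
    (hF : ∀ z, F z = ∑ i : Fin n, ∑ j : Fin n, K z.1 i j * z.2 i * z.2 j + W z.1) :
    (∀ z : (Fin n → ℝ) × (Fin n → ℝ),
        poisson F H z = 2 * (∑ k : Fin n, ρ z.1 k * z.2 k) * H z)
      ↔ (∀ (x : Fin n → ℝ) (i j k : Fin n),
            pd k (fun x => K x i j) x + pd i (fun x => K x j k) x
              + pd j (fun x => K x k i) x
              = ρ x k * kdelta i j + ρ x i * kdelta j k + ρ x j * kdelta k i)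
          ∧ (∀ (x : Fin n → ℝ) (i : Fin n),
              pd i W x = ∑ j : Fin n, K x i j * pd j V x + V x * ρ x i) := by
  obtain rfl : H = quadHam 1 V := funext fun z => (hH z).trans (quadHam_one z).symm
  obtain rfl : F = quadHam K W := funext hF
  rw [Prod.forall, ← forall_and]
  exact forall_congr' fun x => poisson_quadHam_one_eq_iff
    (fun i j => (hK i j).differentiable one_ne_zero) hKsymm (hW.differentiable one_ne_zero)
    (hV.differentiable one_ne_zero) x (ρ x)

theorem stmt2 (n : ℕ) (hn : 1 ≤ n)
    (K : (Fin n → ℝ) → Matrix (Fin n) (Fin n) ℝ)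
    (hK : ∀ i j, ContDiff ℝ 1 (fun x => K x i j))
    (hKsymm : ∀ x, (K x).IsSymm)
    (V W : (Fin n → ℝ) → ℝ) (hV : ContDiff ℝ 1 V) (hW : ContDiff ℝ 1 W)
    (ρ : (Fin n → ℝ) → Fin n → ℝ) (hρ : Continuous ρ)
    (H F : (Fin n → ℝ) × (Fin n → ℝ) → ℝ)
    (hH : ∀ z, H z = ∑ i : Fin n, (z.2 i) ^ 2 + V z.1)
    (hF : ∀ z, F z = ∑ i : Fin n, ∑ j : Fin n, K z.1 i j * z.2 i * z.2 j + W z.1) :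
    (∀ z : (Fin n → ℝ) × (Fin n → ℝ),
        poisson F H z = 2 * (∑ k : Fin n, ρ z.1 k * z.2 k) * H z)
      ↔ (∀ (x : Fin n → ℝ) (i j k : Fin n),
            pd k (fun x => K x i j) x + pd i (fun x => K x j k) x
              + pd j (fun x => K x k i) x
              = ρ x k * kdelta i j + ρ x i * kdelta j k + ρ x j * kdelta k i)
          ∧ (∀ (x : Fin n → ℝ) (i : Fin n),
              pd i W x = ∑ j : Fin n, K x i j * pd j V x + V x * ρ x i) :=
  stmt2_general n K hK hKsymm V W hV hW ρ H F hH hF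
end

section
/- Let H : ℝⁿ × ℝⁿ → ℝ be C² and V : ℝⁿ → ℝ be C², nowhere zero; regard V as a function on ℝⁿ × ℝⁿ depending only on the x-variables, and set H̃ := H/V. Let γ : ℝ → ℝⁿ × ℝⁿ be a solution of Hamilton's equations for H̃ with H(γ(0)) = 0. Then: (a) H(γ(t)) = 0 for all t; (b) if τ : I → ℝ is differentiable on an interval I containing 0, with τ(0) = 0 and τ'(u) = V(x(τ(u))) where x(t) denotes the position component of γ(t), then the reparametrized curve σ := γ ∘ τ satisfies Hamilton's equations for H, i.e. σ'(u) = X_H(σ(u)) for all u ∈ I. -/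
open scoped BigOperators

/-- Hamiltonian vector field of `H` on ℝⁿ × ℝⁿ: `(∂H/∂p, −∂H/∂x)`. -/
noncomputable def hamVF {n : ℕ} (H : (Fin n → ℝ) × (Fin n → ℝ) → ℝ)
    (z : (Fin n → ℝ) × (Fin n → ℝ)) : (Fin n → ℝ) × (Fin n → ℝ) :=
  (fun i => pdp i H z, fun i => - pdx i H z)

/-!
Along a trajectory γ of `X_{H/V}` one has `d/dt H(γ t) = {H, H/V}(γ t) = g(t) · H(γ t)` with
`g = ⟨∇V, ∂H/∂p⟩ / V²` continuous, so `H ∘ γ` solves a scalar linear ODE and vanishes identically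
once it vanishes at `0`. On `{H = 0}` the term `-H ∇V / V²` of `∂(H/V)/∂x` drops out, so
`V • X_{H/V} = X_H` there, and the chain rule for `γ ∘ τ` with `τ' = V` gives `X_H`.
-/

theorem fderiv_div_apply {E : Type*} [NormedAddCommGroup E] [NormedSpace ℝ E] {f g : E → ℝ}
    {z : E} (hf : DifferentiableAt ℝ f z) (hg : DifferentiableAt ℝ g z) (hz : g z ≠ 0) (v : E) :
    fderiv ℝ (fun w => f w / g w) z v
      = (fderiv ℝ f z v * g z - f z * fderiv ℝ g z v) / g z ^ 2 := by
  have hdiv := hf.hasFDerivAt.fun_mul ((hasFDerivAt_inv hz).comp z hg.hasFDerivAt)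
  rw [show (fun w => f w / g w) = fun w => f w * ((fun x => x⁻¹) ∘ g) w from
    funext fun w => div_eq_mul_inv _ _, hdiv.fderiv]
  simp only [Function.comp_apply, add_apply, smul_apply,
    ContinuousLinearMap.comp_apply, ContinuousLinearMap.toSpanSingleton_apply, smul_eq_mul, mul_neg]
  field_simp
  ring

theorem fderiv_comp_fst_apply {E F G : Type*} [NormedAddCommGroup E] [NormedSpace ℝ E]
    [NormedAddCommGroup F] [NormedSpace ℝ F] [NormedAddCommGroup G] [NormedSpace ℝ G]
    {f : E → G} {z : E × F} (hf : DifferentiableAt ℝ f z.1) (v : E × F) :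
    fderiv ℝ (fun w => f w.1) z v = fderiv ℝ f z.1 v.1 :=
  DFunLike.congr_fun (hf.hasFDerivAt.comp z hasFDerivAt_fst).fderiv v

theorem eq_mul_exp_integral_of_hasDerivAt {f g : ℝ → ℝ} (hg : Continuous g)
    (hf : ∀ t, HasDerivAt f (g t * f t) t) (t : ℝ) :
    f t = f 0 * Real.exp (∫ s in (0 : ℝ)..t, g s) := by
  set G := fun t => ∫ s in (0 : ℝ)..t, g s
  have hG : ∀ t, HasDerivAt G (g t) t := fun t =>
    intervalIntegral.integral_hasDerivAt_right (hg.intervalIntegrable _ _)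
      (hg.stronglyMeasurableAtFilter _ _) hg.continuousAt
  have hderiv : ∀ t, HasDerivAt (fun t => f t * Real.exp (-G t)) 0 t := fun t =>
    ((hf t).mul (hG t).neg.exp).congr_deriv (by ring)
  have hconst := is_const_of_deriv_eq_zero (fun t => (hderiv t).differentiableAt)
    (fun t => (hderiv t).deriv) t 0
  simp only [G, intervalIntegral.integral_same, neg_zero, Real.exp_zero, mul_one] at hconst
  rw [← hconst, mul_assoc, ← Real.exp_add, neg_add_cancel, Real.exp_zero, mul_one]

section PhaseSpace

variable {n : ℕ}

theorem fderiv_apply_prod_eq_sum (F : (Fin n → ℝ) × (Fin n → ℝ) → ℝ)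
    (z : (Fin n → ℝ) × (Fin n → ℝ)) (a b : Fin n → ℝ) :
    fderiv ℝ F z (a, b) = ∑ i, a i * pdx i F z + ∑ i, b i * pdp i F z := by
  have hab : (a, b) = ∑ i, (a i • ((Pi.single i 1 : Fin n → ℝ), (0 : Fin n → ℝ))
      + b i • ((0 : Fin n → ℝ), (Pi.single i 1 : Fin n → ℝ))) := by
    ext j <;> simp [Prod.fst_sum, Prod.snd_sum, Finset.sum_apply, Pi.single_apply]
  rw [hab, map_sum, ← Finset.sum_add_distrib]
  refine Finset.sum_congr rfl fun i _ => ?_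
  rw [map_add, map_smul, map_smul, smul_eq_mul, smul_eq_mul, pdx, pdp]

theorem fderiv_apply_hamVF (F G : (Fin n → ℝ) × (Fin n → ℝ) → ℝ)
    (z : (Fin n → ℝ) × (Fin n → ℝ)) :
    fderiv ℝ F z (hamVF G z) = poisson F G z := by
  rw [hamVF, fderiv_apply_prod_eq_sum, poisson, ← Finset.sum_add_distrib]
  exact Finset.sum_congr rfl fun i _ => by ring

theorem hasDerivAt_poisson_of_hasDerivAt_hamVF {F G : (Fin n → ℝ) × (Fin n → ℝ) → ℝ}
    {γ : ℝ → (Fin n → ℝ) × (Fin n → ℝ)} {t : ℝ} (hF : DifferentiableAt ℝ F (γ t))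
    (hγ : HasDerivAt γ (hamVF G (γ t)) t) :
    HasDerivAt (fun s => F (γ s)) (poisson F G (γ t)) t := by
  rw [← fderiv_apply_hamVF]
  exact hF.hasFDerivAt.comp_hasDerivAt t hγ

variable {H : (Fin n → ℝ) × (Fin n → ℝ) → ℝ} {V : (Fin n → ℝ) → ℝ}
  {z : (Fin n → ℝ) × (Fin n → ℝ)}

theorem pdp_div (hH : DifferentiableAt ℝ H z) (hV : DifferentiableAt ℝ V z.1) (hz : V z.1 ≠ 0)
    (i : Fin n) : pdp i (fun w => H w / V w.1) z = pdp i H z / V z.1 := by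
  have hV' : DifferentiableAt ℝ (fun w : (Fin n → ℝ) × (Fin n → ℝ) => V w.1) z :=
    hV.comp z differentiableAt_fst
  rw [pdp, fderiv_div_apply hH hV' hz, fderiv_comp_fst_apply hV]
  simp only [map_zero, mul_zero, sub_zero, pdp]
  field_simp

theorem pdx_div (hH : DifferentiableAt ℝ H z) (hV : DifferentiableAt ℝ V z.1) (hz : V z.1 ≠ 0)
    (i : Fin n) :
    pdx i (fun w => H w / V w.1) z = (pdx i H z * V z.1 - H z * pd i V z.1) / V z.1 ^ 2 := by
  have hV' : DifferentiableAt ℝ (fun w : (Fin n → ℝ) × (Fin n → ℝ) => V w.1) z :=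
    hV.comp z differentiableAt_fst
  rw [pdx, fderiv_div_apply hH hV' hz, fderiv_comp_fst_apply hV]
  rfl

theorem poisson_div (hH : DifferentiableAt ℝ H z) (hV : DifferentiableAt ℝ V z.1)
    (hz : V z.1 ≠ 0) :
    poisson H (fun w => H w / V w.1) z = (∑ i, pd i V z.1 * pdp i H z) / V z.1 ^ 2 * H z := by
  simp only [poisson, pdp_div hH hV hz, pdx_div hH hV hz, Finset.sum_div, Finset.sum_mul]
  refine Finset.sum_congr rfl fun i _ => ?_
  field_simp
  ring

theorem smul_hamVF_div (hH : DifferentiableAt ℝ H z) (hV : DifferentiableAt ℝ V z.1)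
    (hz : V z.1 ≠ 0) (hHz : H z = 0) :
    V z.1 • hamVF (fun w => H w / V w.1) z = hamVF H z := by
  ext i <;>
    simp only [hamVF, pdp_div hH hV hz, pdx_div hH hV hz, hHz, zero_mul, sub_zero, Prod.smul_mk,
      Pi.smul_apply, smul_eq_mul, mul_neg, neg_inj] <;>
    field_simp

theorem ContDiff.continuous_pd {f : (Fin n → ℝ) → ℝ} (hf : ContDiff ℝ 1 f) (i : Fin n) :
    Continuous (pd i f) :=
  (hf.continuous_fderiv one_ne_zero).clm_apply continuous_const

theorem ContDiff.continuous_pdp (hH : ContDiff ℝ 1 H) (i : Fin n) : Continuous (pdp i H) :=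
  (hH.continuous_fderiv one_ne_zero).clm_apply continuous_const

theorem hamiltonian_eq_zero_of_hasDerivAt_hamVF_div (hH : ContDiff ℝ 1 H) (hV : ContDiff ℝ 1 V)
    (hV0 : ∀ x, V x ≠ 0) {γ : ℝ → (Fin n → ℝ) × (Fin n → ℝ)}
    (hγ : ∀ t, HasDerivAt γ (hamVF (fun w => H w / V w.1) (γ t)) t) (h0 : H (γ 0) = 0)
    (t : ℝ) : H (γ t) = 0 := by
  set g : ℝ → ℝ := fun t => (∑ i, pd i V (γ t).1 * pdp i H (γ t)) / V (γ t).1 ^ 2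
  have hγc : Continuous γ := continuous_iff_continuousAt.2 fun t => (hγ t).continuousAt
  have hpd := hV.continuous_pd
  have hpdp := hH.continuous_pdp
  have hg : Continuous g := by
    fun_prop (disch := exact fun t => pow_ne_zero _ (hV0 _))
  have hderiv : ∀ t, HasDerivAt (fun s => H (γ s)) (g t * H (γ t)) t := fun t => by
    rw [← poisson_div (hH.differentiable one_ne_zero _) (hV.differentiable one_ne_zero _) (hV0 _)]
    exact hasDerivAt_poisson_of_hasDerivAt_hamVF (hH.differentiable one_ne_zero _) (hγ t)
  rw [eq_mul_exp_integral_of_hasDerivAt hg hderiv t, h0, zero_mul]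

end PhaseSpace

theorem stmt8_general (n : ℕ)
    (H : (Fin n → ℝ) × (Fin n → ℝ) → ℝ) (hH : ContDiff ℝ 2 H)
    (V : (Fin n → ℝ) → ℝ) (hV : ContDiff ℝ 2 V) (hV0 : ∀ x, V x ≠ 0)
    (Htilde : (Fin n → ℝ) × (Fin n → ℝ) → ℝ)
    (hHt : ∀ z, Htilde z = H z / V z.1)
    (γ : ℝ → (Fin n → ℝ) × (Fin n → ℝ))
    (hγ : ∀ t : ℝ, HasDerivAt γ (hamVF Htilde (γ t)) t)
    (h0 : H (γ 0) = 0)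
    (I : Set ℝ)
    (τ : ℝ → ℝ)
    (hτ' : ∀ u ∈ I, HasDerivWithinAt τ (V ((γ (τ u)).1)) I u) :
    (∀ t : ℝ, H (γ t) = 0)
      ∧ (∀ u ∈ I, HasDerivWithinAt (fun v => γ (τ v)) (hamVF H (γ (τ u))) I u) := by
  obtain rfl : Htilde = fun z => H z / V z.1 := funext hHt
  have hH1 : ContDiff ℝ 1 H := hH.of_le one_le_two
  have hV1 : ContDiff ℝ 1 V := hV.of_le one_le_two
  have hzero := hamiltonian_eq_zero_of_hasDerivAt_hamVF_div hH1 hV1 hV0 hγ h0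
  refine ⟨hzero, fun u hu => ?_⟩
  rw [← smul_hamVF_div (hH1.differentiable one_ne_zero _) (hV1.differentiable one_ne_zero _)
    (hV0 _) (hzero _)]
  exact (hγ (τ u)).scomp_hasDerivWithinAt u (hτ' u hu)

theorem stmt8 (n : ℕ)
    (H : (Fin n → ℝ) × (Fin n → ℝ) → ℝ) (hH : ContDiff ℝ 2 H)
    (V : (Fin n → ℝ) → ℝ) (hV : ContDiff ℝ 2 V) (hV0 : ∀ x, V x ≠ 0)
    (Htilde : (Fin n → ℝ) × (Fin n → ℝ) → ℝ)
    (hHt : ∀ z, Htilde z = H z / V z.1)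
    (γ : ℝ → (Fin n → ℝ) × (Fin n → ℝ))
    (hγ : ∀ t : ℝ, HasDerivAt γ (hamVF Htilde (γ t)) t)
    (h0 : H (γ 0) = 0)
    (I : Set ℝ) (hI : I.OrdConnected) (h0I : (0 : ℝ) ∈ I)
    (τ : ℝ → ℝ) (hτ0 : τ 0 = 0)
    (hτ' : ∀ u ∈ I, HasDerivWithinAt τ (V ((γ (τ u)).1)) I u) :
    (∀ t : ℝ, H (γ t) = 0)
      ∧ (∀ u ∈ I, HasDerivWithinAt (fun v => γ (τ v)) (hamVF H (γ (τ u))) I u) :=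
  stmt8_general n H hH V hV hV0 Htilde hHt γ hγ h0 I τ hτ'
end

section
/- Let n ≥ 2 and μ₀, μ_{n+1} ∈ ℝ, μ = (μ_1,…,μ_n) ∈ ℝⁿ. On P × ℝⁿ with P = {x ∈ ℝⁿ : x^i > 0 for all i}, define the Smorodinski–Winternitz Hamiltonian H(x,p) = ∑_i p_i² + μ₀ ∑_i (x^i)² + ∑_i μ_i/(x^i)² + μ_{n+1}. Then for every pair of distinct indices i, j ∈ {1,…,n}, the function G_{ij}(x,p) = (x^i p_j − x^j p_i)² + μ_i (x^j/x^i)² + μ_j (x^i/x^j)² satisfies {G_{ij}, H} = 0 at every point of P × ℝⁿ. -/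
/-!
Both `G_ij` and `H` have explicit differentials. Since `H` is the kinetic energy plus a potential
that separates in the coordinates, `{G_ij, H} = ∑ₖ (2 pₖ ∂G_ij/∂xᵏ - Vₖ'(xᵏ) ∂G_ij/∂pₖ)`, and only
`k = i, j` contribute. The squared angular momentum `(xⁱpⱼ - xʲpᵢ)²` commutes with the rotation
invariant part `∑ pₖ² + μ₀ ∑ (xᵏ)²`, and its bracket with the centrifugal terms `μᵢ/(xⁱ)² + μⱼ/(xʲ)²`
cancels the bracket of `μᵢ (xʲ/xⁱ)² + μⱼ (xⁱ/xʲ)²` with the kinetic energy.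
-/

open scoped BigOperators

namespace PhaseSpace

variable {n : ℕ}

def coordX (k : Fin n) : ((Fin n → ℝ) × (Fin n → ℝ)) →L[ℝ] ℝ :=
  (ContinuousLinearMap.proj k).comp (ContinuousLinearMap.fst ℝ _ _)

def coordP (k : Fin n) : ((Fin n → ℝ) × (Fin n → ℝ)) →L[ℝ] ℝ :=
  (ContinuousLinearMap.proj k).comp (ContinuousLinearMap.snd ℝ _ _)

@[simp] lemma coordX_apply (k : Fin n) (v : (Fin n → ℝ) × (Fin n → ℝ)) : coordX k v = v.1 k := rfl

@[simp] lemma coordP_apply (k : Fin n) (v : (Fin n → ℝ) × (Fin n → ℝ)) : coordP k v = v.2 k := rfl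

def covector (a b : Fin n → ℝ) : ((Fin n → ℝ) × (Fin n → ℝ)) →L[ℝ] ℝ :=
  ∑ k, (a k • coordX k + b k • coordP k)

lemma covector_apply (a b : Fin n → ℝ) (v : (Fin n → ℝ) × (Fin n → ℝ)) :
    covector a b v = ∑ k, (a k * v.1 k + b k * v.2 k) := by
  simp [covector]

@[simp] lemma covector_apply_single_fst (a b : Fin n → ℝ) (k : Fin n) :
    covector a b (Pi.single k 1, 0) = a k := by
  simp [covector_apply, Pi.single_apply]

@[simp] lemma covector_apply_single_snd (a b : Fin n → ℝ) (k : Fin n) :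
    covector a b (0, Pi.single k 1) = b k := by
  simp [covector_apply, Pi.single_apply]

lemma poisson_eq_of_hasFDerivAt_covector {F G : (Fin n → ℝ) × (Fin n → ℝ) → ℝ}
    {z : (Fin n → ℝ) × (Fin n → ℝ)} {a b c d : Fin n → ℝ}
    (hF : HasFDerivAt F (covector a b) z) (hG : HasFDerivAt G (covector c d) z) :
    poisson F G z = ∑ k, (a k * d k - b k * c k) := by
  simp [poisson, pdx, pdp, hF.fderiv, hG.fderiv]

lemma hasFDerivAt_kinetic_add_potential {V : Fin n → ℝ → ℝ} {V' : Fin n → ℝ}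
    {z : (Fin n → ℝ) × (Fin n → ℝ)} (hV : ∀ k, HasDerivAt (V k) (V' k) (z.1 k)) (c : ℝ) :
    HasFDerivAt (fun w : (Fin n → ℝ) × (Fin n → ℝ) => ∑ k, (w.2 k ^ 2 + V k (w.1 k)) + c)
      (covector V' (2 • z.2)) z := by
  have hk : ∀ k ∈ Finset.univ,
      HasFDerivAt (fun w : (Fin n → ℝ) × (Fin n → ℝ) => w.2 k ^ 2 + V k (w.1 k))
        ((2 * z.2 k) • coordP k + V' k • coordX k) z := fun k _ =>
    (((coordP k).hasFDerivAt.pow 2).fun_add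
      ((hV k).comp_hasFDerivAt z (coordX k).hasFDerivAt)).congr_fderiv (by simp)
  refine ((HasFDerivAt.fun_sum hk).add_const c).congr_fderiv ?_
  ext v <;> simp [covector, add_comm]

lemma hasFDerivAt_coord_div {i j : Fin n} {z : (Fin n → ℝ) × (Fin n → ℝ)} (hi : z.1 i ≠ 0) :
    HasFDerivAt (fun w : (Fin n → ℝ) × (Fin n → ℝ) => w.1 j / w.1 i)
      ((z.1 i)⁻¹ • coordX j - (z.1 j / z.1 i ^ 2) • coordX i) z := by
  have hinv := (hasDerivAt_inv hi).comp_hasFDerivAt z (coordX i).hasFDerivAt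
  refine ((coordX j).hasFDerivAt.mul hinv).congr_fderiv ?_
  ext v <;> simp [div_eq_mul_inv, sq, mul_comm, mul_assoc, sub_eq_neg_add]

def angularMomentum (i j : Fin n) (w : (Fin n → ℝ) × (Fin n → ℝ)) : ℝ :=
  w.1 i * w.2 j - w.1 j * w.2 i

noncomputable def swIntegral (μ : Fin n → ℝ) (i j : Fin n) (w : (Fin n → ℝ) × (Fin n → ℝ)) : ℝ :=
  angularMomentum i j w ^ 2 + μ i * (w.1 j / w.1 i) ^ 2 + μ j * (w.1 i / w.1 j) ^ 2

lemma hasFDerivAt_swIntegral (μ : Fin n → ℝ) (i j : Fin n) {z : (Fin n → ℝ) × (Fin n → ℝ)}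
    (hi : z.1 i ≠ 0) (hj : z.1 j ≠ 0) :
    HasFDerivAt (swIntegral μ i j)
      (covector
        (Pi.single i (2 * angularMomentum i j z * z.2 j - 2 * μ i * z.1 j ^ 2 / z.1 i ^ 3
            + 2 * μ j * z.1 i / z.1 j ^ 2 : ℝ)
          + Pi.single j (-2 * angularMomentum i j z * z.2 i + 2 * μ i * z.1 j / z.1 i ^ 2
            - 2 * μ j * z.1 i ^ 2 / z.1 j ^ 3 : ℝ))
        (Pi.single i (-2 * angularMomentum i j z * z.1 j : ℝ)
          + Pi.single j (2 * angularMomentum i j z * z.1 i : ℝ))) z := by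
  have hL : HasFDerivAt (angularMomentum i j) _ z :=
    ((coordX i).hasFDerivAt.mul (coordP j).hasFDerivAt).sub
      ((coordX j).hasFDerivAt.mul (coordP i).hasFDerivAt)
  refine (((hL.pow 2).add (((hasFDerivAt_coord_div hi).pow 2).const_mul (μ i))).add
    (((hasFDerivAt_coord_div hj).pow 2).const_mul (μ j))).congr_fderiv ?_
  ext v <;>
    simp [covector_apply, Pi.single_apply, Finset.sum_add_distrib, add_mul, ite_mul,
      angularMomentum] <;>
    field_simp <;> ring

lemma hasDerivAt_mul_sq_add_div_sq (a b : ℝ) {t : ℝ} (ht : t ≠ 0) :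
    HasDerivAt (fun s => a * s ^ 2 + b / s ^ 2) (2 * a * t - 2 * b / t ^ 3) t := by
  refine (((hasDerivAt_pow 2 t).const_mul a).fun_add
    ((hasDerivAt_const t b).fun_div (hasDerivAt_pow 2 t) (pow_ne_zero 2 ht))).congr_deriv ?_
  field_simp
  ring

end PhaseSpace

open PhaseSpace

theorem stmt12_general (n : ℕ)
    (μ₀ μlast : ℝ) (μ : Fin n → ℝ)
    (H : (Fin n → ℝ) × (Fin n → ℝ) → ℝ)
    (hH : ∀ z, H z = ∑ i : Fin n, (z.2 i) ^ 2
        + μ₀ * ∑ i : Fin n, (z.1 i) ^ 2 + ∑ i : Fin n, μ i / (z.1 i) ^ 2 + μlast) :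
    ∀ i j : Fin n, i ≠ j → ∀ z : (Fin n → ℝ) × (Fin n → ℝ), (∀ k : Fin n, 0 < z.1 k) →
      poisson (fun w => (w.1 i * w.2 j - w.1 j * w.2 i) ^ 2
        + μ i * (w.1 j / w.1 i) ^ 2 + μ j * (w.1 i / w.1 j) ^ 2) H z = 0 := by
  intro i j _ z hz
  show poisson (swIntegral μ i j) H z = 0
  have hx : ∀ k, z.1 k ≠ 0 := fun k => (hz k).ne'
  have hH' : H = fun w => ∑ k, (w.2 k ^ 2 + (μ₀ * w.1 k ^ 2 + μ k / w.1 k ^ 2)) + μlast := by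
    funext w
    rw [hH, Finset.mul_sum, ← Finset.sum_add_distrib, ← Finset.sum_add_distrib]
    simp only [add_assoc]
  rw [hH']
  refine (poisson_eq_of_hasFDerivAt_covector (hasFDerivAt_swIntegral μ i j (hx i) (hx j))
    (hasFDerivAt_kinetic_add_potential (fun k => hasDerivAt_mul_sq_add_div_sq μ₀ (μ k) (hx k))
      μlast)).trans ?_
  simp only [angularMomentum, Pi.add_apply, Pi.single_apply, Pi.smul_apply, nsmul_eq_mul,
    Nat.cast_ofNat, add_mul, ite_mul, sub_mul, zero_mul, Finset.sum_sub_distrib,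
    Finset.sum_add_distrib, Finset.sum_ite_eq', Finset.mem_univ, ↓reduceIte]
  field_simp [hx i, hx j]
  ring

theorem stmt12 (n : ℕ) (hn : 2 ≤ n)
    (μ₀ μlast : ℝ) (μ : Fin n → ℝ)
    (H : (Fin n → ℝ) × (Fin n → ℝ) → ℝ)
    (hH : ∀ z, H z = ∑ i : Fin n, (z.2 i) ^ 2
        + μ₀ * ∑ i : Fin n, (z.1 i) ^ 2 + ∑ i : Fin n, μ i / (z.1 i) ^ 2 + μlast) :
    ∀ i j : Fin n, i ≠ j → ∀ z : (Fin n → ℝ) × (Fin n → ℝ), (∀ k : Fin n, 0 < z.1 k) →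
      poisson (fun w => (w.1 i * w.2 j - w.1 j * w.2 i) ^ 2
        + μ i * (w.1 j / w.1 i) ^ 2 + μ j * (w.1 i / w.1 j) ^ 2) H z = 0 :=
  stmt12_general n μ₀ μlast μ H hH
end
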